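/- arXiv:2305.03861 — 2 statements merged into one kernel-verified Lean document; each statement's English description precedes it below -/
import Mathlib

section
/- Let n ≥ 4 and let λ₁, …, λₙ be real numbers with λ₁ + ⋯ + λₙ = 0. Writing pₖ = σₖ(λ)/C(n,k), equality p₄ + 3p₂² = 0 holds if and only if at least n − 1 of the numbers λ₁, …, λₙ are equal to one another. -/
/-!
Since `∑ λᵢ = 0`, Newton's identities give `σ₂ = -P₂ / 2` and `σ₄ = (P₂² / 2 - P₄) / 4` for the
power sums `Pₖ = ∑ λᵢᵏ`, so `p₄ + 3 p₂²` is a positive multiple of `(n² - 3n + 3) P₂² - n (n - 1) P₄`.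
Four times this quantity is the sum of squares `∑ ((λⱼ - λₖ)(λₗ - λₘ))²` over all `j, k` and all
`l, m ∉ {j, k}`. Hence `p₄ + 3 p₂² = 0` iff `λⱼ = λₖ` or `λₗ = λₘ` whenever `{l, m}` avoids `{j, k}`,
and for `n ≥ 4` this happens iff at most one `λᵢ` differs from the common value of the others.
-/

open Finset

/-- The `k`-th elementary symmetric polynomial of `lam 0, …, lam (n-1)`. -/
noncomputable def esymm {n : ℕ} (k : ℕ) (lam : Fin n → ℝ) : ℝ :=
  ∑ s ∈ (Finset.univ : Finset (Fin n)).powersetCard k, ∏ i ∈ s, lam i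

/-- The normalized elementary symmetric function `p k = σ k / C(n,k)`. -/
noncomputable def p {n : ℕ} (k : ℕ) (lam : Fin n → ℝ) : ℝ :=
  esymm k lam / (n.choose k)

theorem mul_esymm_eq_sum {n : ℕ} (lam : Fin n → ℝ) (k : ℕ) :
    k * esymm k lam = (-1) ^ (k + 1) *
      ∑ i ∈ range k, (-1) ^ i * esymm i lam * ∑ j, lam j ^ (k - i) := by
  have h := MvPolynomial.mul_esymm_eq_sum (Fin n) ℝ k
  rw [sum_filter, Nat.sum_antidiagonal_eq_sum_range_succ_mk, sum_range_succ,
    if_neg (lt_irrefl k), add_zero, sum_congr rfl fun i hi => if_pos (mem_range.1 hi)] at h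
  simpa [MvPolynomial.esymm, MvPolynomial.psum, esymm] using congrArg (MvPolynomial.eval lam) h

theorem esymm_zero {n : ℕ} (lam : Fin n → ℝ) : esymm 0 lam = 1 := by
  simp [esymm]

theorem esymm_one {n : ℕ} (lam : Fin n → ℝ) : esymm 1 lam = ∑ i, lam i := by
  simp [esymm, powersetCard_one]

section SumEqZero

variable {n : ℕ} {lam : Fin n → ℝ}

theorem esymm_two_of_sum_eq_zero (hsum : ∑ i, lam i = 0) :
    esymm 2 lam = -(∑ i, lam i ^ 2) / 2 := by
  have h := mul_esymm_eq_sum lam 2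
  simp only [sum_range_succ, range_zero, sum_empty, esymm_zero, esymm_one, hsum] at h
  linear_combination h / 2

theorem esymm_four_of_sum_eq_zero (hsum : ∑ i, lam i = 0) :
    esymm 4 lam = ((∑ i, lam i ^ 2) ^ 2 / 2 - ∑ i, lam i ^ 4) / 4 := by
  have h := mul_esymm_eq_sum lam 4
  simp only [sum_range_succ, range_zero, sum_empty, esymm_zero, esymm_one, Nat.reduceSub, pow_one,
    hsum, esymm_two_of_sum_eq_zero hsum] at h
  linear_combination h / 4

end SumEqZero

theorem Nat.cast_choose_four (K : Type*) [Field K] [CharZero K] (n : ℕ) :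
    (n.choose 4 : K) = n * (n - 1) * (n - 2) * (n - 3) / 24 := by
  rcases lt_or_ge n 4 with hn | hn
  · rw [Nat.choose_eq_zero_of_lt hn]
    interval_cases n <;> norm_num
  · obtain ⟨m, rfl⟩ := Nat.exists_eq_add_of_le' hn
    have : (m.factorial : K) ≠ 0 := Nat.cast_ne_zero.2 m.factorial_ne_zero
    rw [Nat.cast_choose K hn, Nat.add_sub_cancel]
    push_cast [Nat.factorial_succ]
    field_simp
    ring

theorem sum_sum_sub_sq {ι R : Type*} [CommRing R] (s : Finset ι) (a : ι → R) :
    ∑ l ∈ s, ∑ m ∈ s, (a l - a m) ^ 2 = 2 * #s * ∑ i ∈ s, a i ^ 2 - 2 * (∑ i ∈ s, a i) ^ 2 := by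
  simp only [sub_sq, sum_add_distrib, sum_sub_distrib, sum_const, ← mul_sum, ← sum_mul,
    nsmul_eq_mul]
  ring

section DisjointPairs

variable {ι : Type*} [Fintype ι] [DecidableEq ι]

def disjointPairSum (f : ι → ℝ) : ℝ :=
  ∑ j, ∑ k, ∑ l ∈ univ \ {j, k}, ∑ m ∈ univ \ {j, k}, ((f j - f k) * (f l - f m)) ^ 2

theorem sum_sum_sdiff_pair_sub_sq {R : Type*} [CommRing R] {f : ι → R} (hsum : ∑ i, f i = 0)
    {j k : ι} (hjk : j ≠ k) :
    ∑ l ∈ univ \ {j, k}, ∑ m ∈ univ \ {j, k}, (f l - f m) ^ 2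
      = 2 * (Fintype.card ι - 2) * (∑ i, f i ^ 2 - f j ^ 2 - f k ^ 2) - 2 * (f j + f k) ^ 2 := by
  have hsub : ({j, k} : Finset ι) ⊆ univ := subset_univ _
  have hcard : #(univ \ {j, k}) = Fintype.card ι - 2 := by
    rw [card_sdiff_of_subset hsub, card_pair hjk, card_univ]
  have htwo : 2 ≤ Fintype.card ι := by
    simpa [card_pair hjk] using card_le_univ ({j, k} : Finset ι)
  rw [sum_sum_sub_sq, hcard, sum_sdiff_eq_sub hsub, sum_sdiff_eq_sub hsub, sum_pair hjk,
    sum_pair hjk, hsum, Nat.cast_sub htwo]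
  push_cast
  ring

theorem disjointPairSum_eq {f : ι → ℝ} (hsum : ∑ i, f i = 0) :
    disjointPairSum f = 4 * (((Fintype.card ι : ℝ) ^ 2 - 3 * Fintype.card ι + 3)
      * (∑ i, f i ^ 2) ^ 2 - Fintype.card ι * (Fintype.card ι - 1) * ∑ i, f i ^ 4) := by
  have hpair : ∀ j k, ∑ l ∈ univ \ {j, k}, ∑ m ∈ univ \ {j, k}, ((f j - f k) * (f l - f m)) ^ 2
      = (f j - f k) ^ 2 * (2 * (Fintype.card ι - 2) * (∑ i, f i ^ 2 - f j ^ 2 - f k ^ 2)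
          - 2 * (f j + f k) ^ 2) := by
    intro j k
    rcases eq_or_ne j k with rfl | hjk
    · simp
    · simp only [mul_pow, ← mul_sum, sum_sum_sdiff_pair_sub_sq hsum hjk]
  simp only [disjointPairSum, hpair]
  ring_nf
  simp only [sum_add_distrib, sum_sub_distrib, sum_neg_distrib, ← mul_sum, ← sum_mul, sum_const,
    card_univ, nsmul_eq_mul, hsum]
  ring

theorem disjointPairSum_eq_zero_iff (f : ι → ℝ) :
    disjointPairSum f = 0 ↔
      ∀ j k l m, l ∉ ({j, k} : Finset ι) → m ∉ ({j, k} : Finset ι) → f j = f k ∨ f l = f m := by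
  simp (disch := first | exact fun _ _ => sq_nonneg _ | exact fun _ _ => by positivity) only
    [disjointPairSum, sum_eq_zero_iff_of_nonneg]
  simp only [mem_univ, mem_sdiff, true_and, forall_const, pow_eq_zero_iff two_ne_zero,
    mul_eq_zero, sub_eq_zero]
  exact ⟨fun h j k l m hl hm => h j k l hl m hm, fun h j k l hl m hm => h j k l m hl hm⟩

end DisjointPairs

section AllButOne

variable {ι α : Type*} [DecidableEq α] {f : ι → α}

theorem card_sub_one_le_card_filter_eq_iff [Fintype ι] (c : α) :
    Fintype.card ι - 1 ≤ #{i | f i = c} ↔ {i | f i ≠ c}.Subsingleton := by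
  have h := card_filter_add_card_filter_not (s := univ) (fun i => f i = c)
  rw [card_univ] at h
  calc _ ↔ #{i | ¬f i = c} ≤ 1 := by omega
    _ ↔ _ := by simp [card_le_one, Set.Subsingleton]

theorem exists_subsingleton_ne_of_disjoint_pairs [Fintype ι] [DecidableEq ι]
    (hcard : 4 ≤ Fintype.card ι)
    (h : ∀ j k l m, l ∉ ({j, k} : Finset ι) → m ∉ ({j, k} : Finset ι) → f j = f k ∨ f l = f m) :
    ∃ c, {i | f i ≠ c}.Subsingleton := by
  by_cases hconst : ∀ a b, f a = f b
  · obtain ⟨a⟩ : Nonempty ι := Fintype.card_pos_iff.mp (by omega)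
    exact ⟨f a, fun i hi => absurd (hconst i a) hi⟩
  push Not at hconst
  obtain ⟨a, b, hab⟩ := hconst
  have hne : a ≠ b := fun h => hab (h ▸ rfl)
  obtain ⟨i₀, hi₀, i₁, hi₁, h01⟩ := one_lt_card.mp <| show 1 < #(univ \ {a, b}) by
    rw [card_sdiff_of_subset (subset_univ _), card_pair hne, card_univ]
    omega
  have hrest : ∀ i ∉ ({a, b} : Finset ι), f i = f i₀ :=
    fun i hi => (h i i₀ a b (by grind) (by grind)).resolve_right hab
  have ha_or_hb : f a = f i₀ ∨ f b = f i₀ :=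
    (h a i₀ b i₁ (by grind) (by grind)).imp_right fun hb => hb.trans (hrest i₁ (by grind))
  refine ⟨f i₀, fun i hi j hj => ?_⟩
  have hi' := not_imp_comm.1 (hrest i) hi
  have hj' := not_imp_comm.1 (hrest j) hj
  -- `i` and `j` lie in `{a, b}`, and by `ha_or_hb` at most one of `a`, `b` differs from `f i₀`
  grind

theorem eq_or_eq_of_subsingleton_ne [DecidableEq ι] {c : α} (hc : {i | f i ≠ c}.Subsingleton)
    {j k l m : ι} (hl : l ∉ ({j, k} : Finset ι)) (hm : m ∉ ({j, k} : Finset ι)) :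
    f j = f k ∨ f l = f m := by
  have ne_of_ne : ∀ {u v}, f u ≠ f v → f u ≠ c ∨ f v ≠ c := fun huv => by
    by_contra! h
    exact huv (h.1.trans h.2.symm)
  by_contra! ⟨hjk, hlm⟩
  rcases ne_of_ne hjk with hx | hx <;> rcases ne_of_ne hlm with hy | hy <;> grind [hc hx hy]

end AllButOne

theorem p_four_add_three_mul_p_two_sq {n : ℕ} (hn : 4 ≤ n) {lam : Fin n → ℝ}
    (hsum : ∑ i, lam i = 0) :
    p 4 lam + 3 * p 2 lam ^ 2
      = 3 / (2 * n ^ 2 * (n - 1) ^ 2 * (n - 2) * (n - 3)) * disjointPairSum lam := by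
  have hn' : (4 : ℝ) ≤ n := by exact_mod_cast hn
  have h0 : (n : ℝ) ≠ 0 := by linarith
  have h1 : (n : ℝ) - 1 ≠ 0 := by linarith
  have h2 : (n : ℝ) - 2 ≠ 0 := by linarith
  have h3 : (n : ℝ) - 3 ≠ 0 := by linarith
  rw [p, p, esymm_two_of_sum_eq_zero hsum, esymm_four_of_sum_eq_zero hsum, Nat.cast_choose_two,
    Nat.cast_choose_four, disjointPairSum_eq hsum, Fintype.card_fin]
  field_simp
  ring

theorem p4_add_three_p2_sq_eq_zero_iff (n : ℕ) (hn : 4 ≤ n) (lam : Fin n → ℝ)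
    (hsum : ∑ i, lam i = 0) :
    p 4 lam + 3 * p 2 lam ^ 2 = 0 ↔
      ∃ c : ℝ, n - 1 ≤ (Finset.univ.filter fun i => lam i = c).card := by
  have hcoeff : 3 / (2 * (n : ℝ) ^ 2 * (n - 1) ^ 2 * (n - 2) * (n - 3)) ≠ 0 := by
    norm_num [sub_eq_zero]
    norm_cast
    omega
  rw [p_four_add_three_mul_p_two_sq hn hsum, mul_eq_zero, or_iff_right hcoeff,
    disjointPairSum_eq_zero_iff]
  constructor
  · intro h
    obtain ⟨c, hc⟩ := exists_subsingleton_ne_of_disjoint_pairs (by simpa using hn) h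
    exact ⟨c, by simpa using (card_sub_one_le_card_filter_eq_iff c).2 hc⟩
  · rintro ⟨c, hc⟩ j k l m hl hm
    exact eq_or_eq_of_subsingleton_ne
      ((card_sub_one_le_card_filter_eq_iff c).1 (by simpa using hc)) hl hm
end

section
/- Let n ≥ 3 and let λ₁, …, λₙ be real numbers with λ₁ + ⋯ + λₙ = 0. Then (Σᵢ λᵢ³)² ≤ ((n − 2)²/(n(n − 1))) · (Σᵢ λᵢ²)³, with equality if and only if at least n − 1 of the numbers λ₁, …, λₙ are equal to one another. -/
/-!
Choose `a ≥ 0` with `n (n - 1) a² = ∑ λᵢ²`. When `∑ λᵢ = 0`,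
`∑ (λᵢ - a)² (λᵢ + (n - 1) a) = ∑ λᵢ³ + (n - 2) a ∑ λᵢ²`, and every term is nonnegative because
Cauchy–Schwarz on the other `n - 1` coordinates gives `|λᵢ| ≤ (n - 1) a`. Applied to `λ` and `-λ`
this yields `|∑ λᵢ³| ≤ (n - 2) a ∑ λᵢ²`, which squares to the inequality. Equality forces every
`λᵢ` into `{b, -(n - 1) b}` for some `b`, and then the zero sum leaves at most one `λᵢ ≠ b`.
-/

open Finset

variable {ι : Type*} [Fintype ι] {x : ι → ℝ}

lemma card_mul_sq_le_of_sum_eq_zero (hx : ∑ i, x i = 0) (i : ι) :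
    Fintype.card ι * x i ^ 2 ≤ (Fintype.card ι - 1) * ∑ j, x j ^ 2 := by
  classical
  have hrest : ∑ j ∈ univ.erase i, x j = -x i := by
    rw [← add_sum_erase univ x (mem_univ i)] at hx
    linarith
  have hcard : ((univ.erase i).card : ℝ) = Fintype.card ι - 1 := by
    rw [card_erase_of_mem (mem_univ i), card_univ, Nat.cast_pred (Fintype.card_pos_iff.mpr ⟨i⟩)]
  have hcs := sq_sum_le_card_mul_sum_sq (s := univ.erase i) (f := x)
  rw [hrest, hcard] at hcs
  rw [← add_sum_erase univ (fun j => x j ^ 2) (mem_univ i)]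
  linear_combination hcs

lemma abs_le_of_sum_eq_zero (hx : ∑ i, x i = 0) {a : ℝ} (ha : 0 ≤ a)
    (hQ : Fintype.card ι * (Fintype.card ι - 1) * a ^ 2 = ∑ i, x i ^ 2) (i : ι) :
    |x i| ≤ (Fintype.card ι - 1) * a := by
  have hn : (1 : ℝ) ≤ Fintype.card ι := by exact_mod_cast Fintype.card_pos_iff.mpr ⟨i⟩
  have h := card_mul_sq_le_of_sum_eq_zero hx i
  rw [← hQ] at h
  refine abs_le_of_sq_le_sq ?_ (mul_nonneg (by linarith) ha)
  nlinarith

lemma sq_sub_mul_add_nonneg (hx : ∑ i, x i = 0) {a : ℝ} (ha : 0 ≤ a)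
    (hQ : Fintype.card ι * (Fintype.card ι - 1) * a ^ 2 = ∑ i, x i ^ 2) (i : ι) :
    0 ≤ (x i - a) ^ 2 * (x i + (Fintype.card ι - 1) * a) :=
  mul_nonneg (sq_nonneg _) (by linarith [neg_abs_le (x i), abs_le_of_sum_eq_zero hx ha hQ i])

lemma sum_sq_sub_mul_add_eq (hx : ∑ i, x i = 0) {a : ℝ}
    (hQ : Fintype.card ι * (Fintype.card ι - 1) * a ^ 2 = ∑ i, x i ^ 2) :
    ∑ i, (x i - a) ^ 2 * (x i + (Fintype.card ι - 1) * a) =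
      ∑ i, x i ^ 3 + (Fintype.card ι - 2) * a * ∑ i, x i ^ 2 := by
  have hexpand : ∀ i, (x i - a) ^ 2 * (x i + (Fintype.card ι - 1) * a) =
      x i ^ 3 + (Fintype.card ι - 3) * a * x i ^ 2 - (2 * Fintype.card ι - 3) * a ^ 2 * x i +
        (Fintype.card ι - 1) * a ^ 3 := fun i => by ring
  simp only [hexpand, sum_add_distrib, sum_sub_distrib, ← mul_sum, sum_const, card_univ,
    nsmul_eq_mul, hx]
  linear_combination a * hQ

lemma neg_mul_le_sum_cube (hx : ∑ i, x i = 0) {a : ℝ} (ha : 0 ≤ a)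
    (hQ : Fintype.card ι * (Fintype.card ι - 1) * a ^ 2 = ∑ i, x i ^ 2) :
    -((Fintype.card ι - 2) * a * ∑ i, x i ^ 2) ≤ ∑ i, x i ^ 3 := by
  have h := sum_nonneg fun i (_ : i ∈ univ) => sq_sub_mul_add_nonneg hx ha hQ i
  rw [sum_sq_sub_mul_add_eq hx hQ] at h
  linarith

lemma forall_eq_or_eq_of_sum_cube_eq (hx : ∑ i, x i = 0) {a : ℝ} (ha : 0 ≤ a)
    (hQ : Fintype.card ι * (Fintype.card ι - 1) * a ^ 2 = ∑ i, x i ^ 2)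
    (heq : ∑ i, x i ^ 3 = -((Fintype.card ι - 2) * a * ∑ i, x i ^ 2)) (i : ι) :
    x i = a ∨ x i = -((Fintype.card ι - 1) * a) := by
  have hzero : ∑ i, (x i - a) ^ 2 * (x i + (Fintype.card ι - 1) * a) = 0 := by
    rw [sum_sq_sub_mul_add_eq hx hQ, heq]
    ring
  have hi := (sum_eq_zero_iff_of_nonneg fun i _ => sq_sub_mul_add_nonneg hx ha hQ i).mp hzero i
    (mem_univ i)
  rcases mul_eq_zero.mp hi with h | h
  · exact .inl (sub_eq_zero.mp (pow_eq_zero_iff two_ne_zero |>.mp h))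
  · exact .inr (by linarith)

lemma sum_neg_sq (x : ι → ℝ) : ∑ i, (-x) i ^ 2 = ∑ i, x i ^ 2 := by
  simp

lemma sum_neg_cube (x : ι → ℝ) : ∑ i, (-x) i ^ 3 = -∑ i, x i ^ 3 := by
  simp [Odd.neg_pow (by decide : Odd 3)]

lemma abs_sum_cube_le (hx : ∑ i, x i = 0) {a : ℝ} (ha : 0 ≤ a)
    (hQ : Fintype.card ι * (Fintype.card ι - 1) * a ^ 2 = ∑ i, x i ^ 2) :
    |∑ i, x i ^ 3| ≤ (Fintype.card ι - 2) * a * ∑ i, x i ^ 2 := by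
  have hneg := neg_mul_le_sum_cube (x := -x) (by simp [hx]) ha (by rwa [sum_neg_sq])
  rw [sum_neg_sq, sum_neg_cube] at hneg
  exact abs_le.mpr ⟨neg_mul_le_sum_cube hx ha hQ, by linarith⟩

lemma exists_forall_eq_or_eq_of_abs_sum_cube_eq (hx : ∑ i, x i = 0) {a : ℝ} (ha : 0 ≤ a)
    (hQ : Fintype.card ι * (Fintype.card ι - 1) * a ^ 2 = ∑ i, x i ^ 2)
    (heq : |∑ i, x i ^ 3| = (Fintype.card ι - 2) * a * ∑ i, x i ^ 2) :
    ∃ b, ∀ i, x i = b ∨ x i = -((Fintype.card ι - 1) * b) := by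
  rcases (abs_eq (heq ▸ abs_nonneg _)).mp heq with hpos | hneg
  · refine ⟨-a, fun i => ?_⟩
    have h := forall_eq_or_eq_of_sum_cube_eq (x := -x) (by simp [hx]) ha
      (by rwa [sum_neg_sq]) (by rw [sum_neg_sq, sum_neg_cube, hpos]) i
    simp only [Pi.neg_apply] at h
    exact h.imp (by intro h; linarith) (by intro h; linarith)
  · exact ⟨a, forall_eq_or_eq_of_sum_cube_eq hx ha hQ hneg⟩

lemma exists_card_filter_eq_ge (hx : ∑ i, x i = 0) {b : ℝ}
    (hb : ∀ i, x i = b ∨ x i = -((Fintype.card ι - 1) * b)) :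
    ∃ c : ℝ, Fintype.card ι - 1 ≤ (univ.filter fun i => x i = c).card := by
  classical
  refine ⟨b, ?_⟩
  set k := (univ.filter fun i => ¬x i = b).card
  suffices hk : k ≤ 1 by
    have := card_filter_add_card_filter_not (s := univ) (fun i => x i = b)
    rw [card_univ] at this
    omega
  have hsum : (Fintype.card ι : ℝ) * b * (1 - k) = 0 := by
    have hxi : ∀ i, x i = b - if x i = b then 0 else Fintype.card ι * b := fun i => by
      by_cases h : x i = b
      · simp [h]
      · rw [if_neg h, (hb i).resolve_left h]
        ring
    rw [← hx, sum_congr rfl fun i _ => hxi i, sum_sub_distrib, sum_ite, sum_const_zero, sum_const,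
      sum_const, card_univ, nsmul_eq_mul, nsmul_eq_mul]
    ring
  rcases mul_eq_zero.mp hsum with h | h
  · rcases mul_eq_zero.mp h with hn | hb0
    · have : k ≤ Fintype.card ι := (card_filter_le _ _).trans (card_univ (α := ι)).le
      have : Fintype.card ι = 0 := by exact_mod_cast hn
      omega
    · have : k = 0 := card_eq_zero.mpr (filter_eq_empty_iff.mpr fun i _ => by
        rcases hb i with h | h <;> simp [h, hb0])
      omega
  · have : (k : ℝ) = 1 := by linarith
    exact_mod_cast this.le

lemma forall_ne_eq_of_card_filter_eq_ge {c : ℝ}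
    (hc : Fintype.card ι - 1 ≤ (univ.filter fun i => x i = c).card) {i : ι} (hi : x i ≠ c) :
    ∀ j ≠ i, x j = c := by
  classical
  have hsub : (univ.filter fun j => x j = c) ⊆ univ.erase i := fun j hj =>
    mem_erase.mpr ⟨fun h => hi (h ▸ (mem_filter.mp hj).2), mem_univ j⟩
  have heq := eq_of_subset_of_card_le hsub (by rwa [card_erase_of_mem (mem_univ i), card_univ])
  intro j hj
  have hj' : j ∈ univ.filter fun j => x j = c := heq ▸ mem_erase.mpr ⟨hj, mem_univ j⟩
  exact (mem_filter.mp hj').2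

lemma sum_comp_eq_of_forall_ne_eq (f : ℝ → ℝ) {i : ι} {c : ℝ} (h : ∀ j ≠ i, x j = c) :
    ∑ j, f (x j) = f (x i) + (Fintype.card ι - 1) * f c := by
  classical
  rw [← add_sum_erase _ _ (mem_univ i), sum_congr rfl fun j hj => by rw [h j (ne_of_mem_erase hj)],
    sum_const, card_erase_of_mem (mem_univ i), card_univ, nsmul_eq_mul,
    Nat.cast_pred (Fintype.card_pos_iff.mpr ⟨i⟩)]

lemma sum_sq_eq_and_sum_cube_eq_of_card_filter_eq_ge (hx : ∑ i, x i = 0) {c : ℝ}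
    (hc : Fintype.card ι - 1 ≤ (univ.filter fun i => x i = c).card) :
    ∑ i, x i ^ 2 = Fintype.card ι * (Fintype.card ι - 1) * c ^ 2 ∧
      ∑ i, x i ^ 3 = -(Fintype.card ι * (Fintype.card ι - 1) * (Fintype.card ι - 2) * c ^ 3) := by
  by_cases hall : ∀ i, x i = c
  · have hnc : Fintype.card ι * c = 0 := by simpa [hall] using hx
    simp only [hall, sum_const, card_univ, nsmul_eq_mul]
    exact ⟨by linear_combination (2 - Fintype.card ι) * c * hnc,
      by linear_combination (1 + (Fintype.card ι - 1) * (Fintype.card ι - 2)) * c ^ 2 * hnc⟩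
  · obtain ⟨i, hi⟩ := not_forall.mp hall
    have hne := forall_ne_eq_of_card_filter_eq_ge hc hi
    have hxi : x i = -((Fintype.card ι - 1) * c) := by
      have := sum_comp_eq_of_forall_ne_eq id hne
      simp only [id, hx] at this
      linarith
    have hsq := sum_comp_eq_of_forall_ne_eq (· ^ 2) hne
    have hcube := sum_comp_eq_of_forall_ne_eq (· ^ 3) hne
    simp only [hxi] at hsq hcube
    exact ⟨by rw [hsq]; ring, by rw [hcube]; ring⟩

theorem power_sum_cube_sq_le (n : ℕ) (hn : 3 ≤ n) (lam : Fin n → ℝ)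
    (hsum : ∑ i, lam i = 0) :
    (∑ i, lam i ^ 3) ^ 2 ≤ ((n : ℝ) - 2) ^ 2 / (n * (n - 1)) * (∑ i, lam i ^ 2) ^ 3 ∧
      ((∑ i, lam i ^ 3) ^ 2 = ((n : ℝ) - 2) ^ 2 / (n * (n - 1)) * (∑ i, lam i ^ 2) ^ 3 ↔
        ∃ c : ℝ, n - 1 ≤ (Finset.univ.filter fun i => lam i = c).card) := by
  have hpos : (0 : ℝ) < n * (n - 1) := by
    have : (3 : ℝ) ≤ n := by exact_mod_cast hn
    nlinarith
  obtain ⟨a, ha, hQ⟩ : ∃ a : ℝ, 0 ≤ a ∧ (n : ℝ) * (n - 1) * a ^ 2 = ∑ i, lam i ^ 2 :=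
    ⟨√((∑ i, lam i ^ 2) / (n * (n - 1))), Real.sqrt_nonneg _, by
      rw [Real.sq_sqrt (div_nonneg (sum_nonneg fun i _ => sq_nonneg _) hpos.le),
        mul_div_cancel₀ _ hpos.ne']⟩
  have hbound := abs_sum_cube_le hsum ha (by rwa [Fintype.card_fin])
  rw [Fintype.card_fin] at hbound
  have hrhs : ((n : ℝ) - 2) ^ 2 / (n * (n - 1)) * (∑ i, lam i ^ 2) ^ 3 =
      (((n : ℝ) - 2) * a * ∑ i, lam i ^ 2) ^ 2 := by
    rw [← hQ]
    field_simp
  refine ⟨hrhs ▸ sq_le_sq' (abs_le.mp hbound).1 (abs_le.mp hbound).2, fun heq => ?_,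
    fun ⟨c, hc⟩ => ?_⟩
  · rw [hrhs, sq_eq_sq_iff_abs_eq_abs, abs_of_nonneg ((abs_nonneg _).trans hbound)] at heq
    obtain ⟨b, hb⟩ := exists_forall_eq_or_eq_of_abs_sum_cube_eq hsum ha (by rwa [Fintype.card_fin])
      (by rwa [Fintype.card_fin])
    simpa using exists_card_filter_eq_ge hsum hb
  · obtain ⟨hsq, hcube⟩ := sum_sq_eq_and_sum_cube_eq_of_card_filter_eq_ge hsum (by simpa using hc)
    rw [Fintype.card_fin] at hsq hcube
    rw [hsq, hcube]
    field_simp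
end
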